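/- Assume that r(0) = sin(π/8). Then there exists a constant c > 0 such that for every x > 0, | ψ(x) − √(2/π) · x^{1/2} | ≤ c x. -/

import Mathlib

open MeasureTheory Real

/-- `L t = ∫_0^t (log s)/(1+s²) ds`. -/
noncomputable def Lfun (t : ℝ) : ℝ := ∫ s in (0 : ℝ)..t, Real.log s / (1 + s ^ 2)

/-- `r(x) = (√2/(2π)) ∫_0^∞ t (1+t²)^{-5/4} exp(L(t)/π) e^{-tx} dt`. -/
noncomputable def rFun (x : ℝ) : ℝ :=
  (Real.sqrt 2 / (2 * Real.pi)) * ∫ t in Set.Ioi (0 : ℝ),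
    t * (1 + t ^ 2) ^ (-(5 / 4 : ℝ)) * Real.exp (Lfun t / Real.pi) * Real.exp (-t * x)

/-- `ψ(x) = sin(x + π/8) - r(x)`. -/
noncomputable def psiFun (x : ℝ) : ℝ := Real.sin (x + Real.pi / 8) - rFun x

/-!
The substitution `s ↦ 1 / s` turns `log s / (1 + s²) ds` into its negative, so `L(∞) = 0`;
as `log` has the sign of `s - 1`, also `L ≤ 0`, and `-L(t) = O(t^{-3/4})`. The density
`ρ(t) = t (1 + t²)^{-5/4} e^{L(t)/π}` of `r` is therefore `t^{-3/2} q(t)` with `0 < q ≤ 1` and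
`1 - q(t) = O(t^{-3/4})`. Now `r(0) - r(x) = (√2 / 2π) ∫ ρ(t) (1 - e^{-tx}) dt`. Its main part
`∫ t^{-3/2} (1 - e^{-tx}) dt = Γ(1/2) / (1/2) · x^{1/2}` (integration by parts) gives
`√(2/π) x^{1/2}`, and, as `1 - e^{-tx} ≤ tx`, the rest is at most
`x ∫ t^{-1/2} (1 - q(t)) dt`, a finite multiple of `x`. Finally
`|sin (x + π/8) - sin (π/8)| ≤ x` and `r(0) = sin (π/8)`.
-/

open Set Filter Topology

theorem integrableOn_Ioi_zero_of_norm_le_rpow {E : Type*} [NormedAddCommGroup E] {f : ℝ → E}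
    {a b C : ℝ} (ha : -1 < a) (hb : b < -1) (hf : ContinuousOn f (Ioi 0))
    (h_zero : ∀ t ∈ Ioc (0 : ℝ) 1, ‖f t‖ ≤ C * t ^ a)
    (h_top : ∀ t ∈ Ioi (1 : ℝ), ‖f t‖ ≤ C * t ^ b) : IntegrableOn f (Ioi 0) := by
  rw [← Ioc_union_Ioi_eq_Ioi zero_le_one]
  refine IntegrableOn.union ?_ ?_
  · have hg : IntegrableOn (fun t : ℝ => C * t ^ a) (Ioc 0 1) :=
      ((intervalIntegrable_iff_integrableOn_Ioc_of_le zero_le_one).1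
        (intervalIntegral.intervalIntegrable_rpow' ha)).const_mul C
    exact hg.mono' ((hf.mono Ioc_subset_Ioi_self).aestronglyMeasurable measurableSet_Ioc)
      ((ae_restrict_iff' measurableSet_Ioc).2 (ae_of_all _ h_zero))
  · have hg : IntegrableOn (fun t : ℝ => C * t ^ b) (Ioi 1) :=
      (integrableOn_Ioi_rpow_of_lt hb zero_lt_one).const_mul C
    exact hg.mono' ((hf.mono (Ioi_subset_Ioi zero_le_one)).aestronglyMeasurable
      measurableSet_Ioi) ((ae_restrict_iff' measurableSet_Ioi).2 (ae_of_all _ h_top))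

theorem one_sub_mul_le_one_add_rpow_neg {u p : ℝ} (hu : 0 ≤ u) (hp : 1 ≤ p) :
    1 - p * u ≤ (1 + u) ^ (-p) := by
  have hu1 : 0 < 1 + u := by linarith
  have hs : -1 ≤ (1 + u)⁻¹ - 1 := by linarith [inv_pos.2 hu1]
  have key := one_add_mul_self_le_rpow_one_add hs hp
  rw [add_sub_cancel, Real.inv_rpow hu1.le, ← Real.rpow_neg hu1.le] at key
  refine le_trans ?_ key
  have : (1 + u)⁻¹ - 1 = -(u / (1 + u)) := by field_simp; ring
  rw [this]
  nlinarith [div_le_self hu (by linarith : (1 : ℝ) ≤ 1 + u)]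

theorem one_sub_exp_neg_nonneg {y : ℝ} (hy : 0 ≤ y) : 0 ≤ 1 - exp (-y) :=
  sub_nonneg.2 (exp_le_one_iff.2 (neg_nonpos.2 hy))

theorem one_sub_exp_neg_le_min (y : ℝ) : 1 - exp (-y) ≤ min 1 y :=
  le_min (by linarith [exp_pos (-y)]) (by linarith [one_sub_le_exp_neg y])

section OneSubExpNeg

variable {s x : ℝ}

theorem integrableOn_rpow_mul_one_sub_exp_neg_mul (hs0 : 0 < s) (hs1 : s < 1) (hx : 0 ≤ x) :
    IntegrableOn (fun t => t ^ (-s - 1) * (1 - exp (-(x * t)))) (Ioi 0) := by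
  refine integrableOn_Ioi_zero_of_norm_le_rpow (a := -s) (b := -s - 1) (C := x + 1)
    (by linarith) (by linarith) ?_ (fun t ht => ?_) (fun t ht => ?_)
  · exact (continuousOn_id.rpow_const fun t ht => Or.inl (ne_of_gt ht)).mul
      (Continuous.continuousOn (by fun_prop))
  · have ht0 : 0 < t := ht.1
    have hu := one_sub_exp_neg_nonneg (mul_nonneg hx ht0.le)
    have hpos := Real.rpow_pos_of_pos ht0 (-s - 1)
    rw [Real.norm_eq_abs, abs_of_nonneg (by positivity)]
    calc t ^ (-s - 1) * (1 - exp (-(x * t))) ≤ t ^ (-s - 1) * ((x + 1) * t) := by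
          gcongr
          exact (one_sub_exp_neg_le_min _).trans ((min_le_right _ _).trans (by nlinarith))
      _ = (x + 1) * t ^ (-s) := by
          rw [mul_left_comm, ← Real.rpow_add_one (ne_of_gt ht0)]; ring_nf
  · have ht0 : 0 < t := one_pos.trans ht
    have hu := one_sub_exp_neg_nonneg (mul_nonneg hx ht0.le)
    have hpos := Real.rpow_pos_of_pos ht0 (-s - 1)
    rw [Real.norm_eq_abs, abs_of_nonneg (by positivity)]
    calc t ^ (-s - 1) * (1 - exp (-(x * t))) ≤ t ^ (-s - 1) * (x + 1) := by
          gcongr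
          exact (one_sub_exp_neg_le_min _).trans ((min_le_left _ _).trans (by linarith))
      _ = (x + 1) * t ^ (-s - 1) := mul_comm _ _

theorem tendsto_rpow_neg_mul_one_sub_exp_neg_mul_nhdsGT_zero (hs1 : s < 1) (hx : 0 ≤ x) :
    Tendsto (fun t => t ^ (-s) * (1 - exp (-(x * t)))) (𝓝[>] 0) (𝓝 0) := by
  have hlim : Tendsto (fun t : ℝ => x * t ^ (1 - s)) (𝓝[>] 0) (𝓝 0) := by
    have := ((Real.continuousAt_rpow_const 0 (1 - s) (Or.inr (by linarith))).tendsto).const_mul x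
    rw [Real.zero_rpow (by linarith), mul_zero] at this
    exact this.mono_left nhdsWithin_le_nhds
  refine squeeze_zero_norm' ?_ hlim
  filter_upwards [self_mem_nhdsWithin] with t (ht : 0 < t)
  have hpos := Real.rpow_pos_of_pos ht (-s)
  rw [Real.norm_eq_abs, abs_of_nonneg (mul_nonneg hpos.le
    (one_sub_exp_neg_nonneg (mul_nonneg hx ht.le)))]
  calc t ^ (-s) * (1 - exp (-(x * t))) ≤ t ^ (-s) * (x * t) := by
        gcongr; exact (one_sub_exp_neg_le_min _).trans (min_le_right _ _)
    _ = x * t ^ (1 - s) := by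
        rw [mul_left_comm, ← Real.rpow_add_one (ne_of_gt ht)]; ring_nf

theorem tendsto_rpow_neg_mul_one_sub_exp_neg_mul_atTop (hs0 : 0 < s) (hx : 0 ≤ x) :
    Tendsto (fun t => t ^ (-s) * (1 - exp (-(x * t)))) atTop (𝓝 0) := by
  refine squeeze_zero_norm' ?_ (tendsto_rpow_neg_atTop hs0)
  filter_upwards [eventually_gt_atTop 0] with t ht
  have hpos := Real.rpow_pos_of_pos ht (-s)
  rw [Real.norm_eq_abs, abs_of_nonneg (mul_nonneg hpos.le
    (one_sub_exp_neg_nonneg (mul_nonneg hx ht.le)))]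
  exact mul_le_of_le_one_right hpos.le ((one_sub_exp_neg_le_min _).trans (min_le_left _ _))

theorem integral_rpow_mul_one_sub_exp_neg_mul (hs0 : 0 < s) (hs1 : s < 1) (hx : 0 < x) :
    ∫ t in Ioi 0, t ^ (-s - 1) * (1 - exp (-(x * t))) = Gamma (1 - s) / s * x ^ s := by
  set u : ℝ → ℝ := fun t => 1 - exp (-(x * t))
  set v : ℝ → ℝ := fun t => -s⁻¹ * t ^ (-s)
  have hu : ∀ t ∈ Ioi (0 : ℝ), HasDerivAt u (x * exp (-(x * t))) t := fun t _ => by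
    simpa [mul_comm] using (((hasDerivAt_id t).const_mul x).neg.exp).const_sub 1
  have hv : ∀ t ∈ Ioi (0 : ℝ), HasDerivAt v (t ^ (-s - 1)) t := fun t ht => by
    refine ((Real.hasDerivAt_rpow_const (p := -s) (Or.inl (ne_of_gt ht))).const_mul
      (-s⁻¹)).congr_deriv ?_
    field_simp
  have huv : u * v = fun t => -s⁻¹ * (t ^ (-s) * (1 - exp (-(x * t)))) := by
    ext t; simp only [Pi.mul_apply, u, v]; ring
  have huv' : IntegrableOn (u * fun t => t ^ (-s - 1)) (Ioi 0) := by
    exact (integrableOn_rpow_mul_one_sub_exp_neg_mul hs0 hs1 hx.le).congr_fun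
      (fun t _ => mul_comm _ _) measurableSet_Ioi
  have hu'v : IntegrableOn ((fun t => x * exp (-(x * t))) * v) (Ioi 0) := by
    refine IntegrableOn.congr_fun ((integrableOn_rpow_mul_exp_neg_mul_rpow (s := -s) (p := 1)
      (by linarith) one_pos hx).const_mul (-(x / s))) (fun t _ => ?_) measurableSet_Ioi
    simp only [Pi.mul_apply, v, Real.rpow_one]
    ring_nf
  have hibp := integral_Ioi_mul_deriv_eq_deriv_mul hu hv huv' hu'v
    (by simpa [huv] using
      (tendsto_rpow_neg_mul_one_sub_exp_neg_mul_nhdsGT_zero hs1 hx.le).const_mul (-s⁻¹))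
    (by simpa [huv] using
      (tendsto_rpow_neg_mul_one_sub_exp_neg_mul_atTop hs0 hx.le).const_mul (-s⁻¹))
  calc ∫ t in Ioi 0, t ^ (-s - 1) * (1 - exp (-(x * t)))
      = ∫ t in Ioi 0, u t * t ^ (-s - 1) := by simp only [u, mul_comm]
    _ = x / s * ∫ t in Ioi 0, t ^ (1 - s - 1) * exp (-(x * t)) := by
        rw [hibp, sub_self, zero_sub, ← integral_const_mul, ← integral_neg]
        refine setIntegral_congr_fun measurableSet_Ioi fun t _ => ?_
        simp only [v, sub_sub_cancel_left]
        ring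
    _ = Gamma (1 - s) / s * x ^ s := by
        rw [Real.integral_rpow_mul_exp_neg_mul_Ioi (by linarith) hx, div_rpow zero_le_one hx.le,
          Real.one_rpow, Real.rpow_sub hx, Real.rpow_one]
        field_simp

end OneSubExpNeg

noncomputable def Lintegrand (s : ℝ) : ℝ := log s / (1 + s ^ 2)

theorem continuousOn_Lintegrand : ContinuousOn Lintegrand (Ioi 0) :=
  (continuousOn_log.mono fun _ hs => ne_of_gt hs).div (by fun_prop) fun s _ => by positivity

theorem abs_Lintegrand_le_of_le_one {s : ℝ} (hs : 0 < s) (hs1 : s ≤ 1) :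
    |Lintegrand s| ≤ 2 * s ^ (-(1 / 2 : ℝ)) := by
  have hlog : |log s| * s ^ (1 / 2 : ℝ) ≤ 2 := by
    simpa [abs_mul, abs_of_pos (Real.rpow_pos_of_pos hs _)] using
      (abs_log_mul_self_rpow_lt s (1 / 2) hs hs1 one_half_pos).le
  calc |Lintegrand s| ≤ |log s| := by
        rw [Lintegrand, abs_div, abs_of_pos (by positivity : (0 : ℝ) < 1 + s ^ 2)]
        exact div_le_self (abs_nonneg _) (by nlinarith)
    _ = |log s| * s ^ (1 / 2 : ℝ) * s ^ (-(1 / 2 : ℝ)) := by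
        rw [mul_assoc, ← Real.rpow_add hs]; norm_num
    _ ≤ 2 * s ^ (-(1 / 2 : ℝ)) := by gcongr

theorem abs_Lintegrand_le_of_one_le {s : ℝ} (hs : 1 ≤ s) :
    |Lintegrand s| ≤ 4 * s ^ (-(7 / 4 : ℝ)) := by
  have hs0 : 0 < s := one_pos.trans_le hs
  have hlog : log s ≤ 4 * s ^ (1 / 4 : ℝ) := by
    have := Real.log_le_rpow_div hs0.le (by norm_num : (0 : ℝ) < 1 / 4)
    linarith
  rw [Lintegrand, abs_of_nonneg (div_nonneg (log_nonneg hs) (by positivity))]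
  calc log s / (1 + s ^ 2) ≤ 4 * s ^ (1 / 4 : ℝ) / s ^ (2 : ℝ) := by
        rw [Real.rpow_two]
        exact div_le_div₀ (by positivity) hlog (by positivity) (by linarith)
    _ = 4 * s ^ (-(7 / 4 : ℝ)) := by
        rw [mul_div_assoc, ← Real.rpow_sub hs0]; norm_num

theorem integrableOn_Lintegrand : IntegrableOn Lintegrand (Ioi 0) := by
  refine integrableOn_Ioi_zero_of_norm_le_rpow (a := -(1 / 2)) (b := -(7 / 4)) (C := 4)
    (by norm_num) (by norm_num) continuousOn_Lintegrand (fun t ht => ?_) (fun t ht => ?_)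
  · rw [Real.norm_eq_abs]
    refine (abs_Lintegrand_le_of_le_one ht.1 ht.2).trans ?_
    have := Real.rpow_nonneg ht.1.le (-(1 / 2 : ℝ))
    linarith
  · exact abs_Lintegrand_le_of_one_le (le_of_lt ht)

theorem Lintegrand_inv_mul_inv_sq (s : ℝ) : Lintegrand s⁻¹ * (s ^ 2)⁻¹ = -Lintegrand s := by
  rcases eq_or_ne s 0 with rfl | hs
  · simp [Lintegrand]
  rw [Lintegrand, Lintegrand, log_inv]
  field_simp
  ring

theorem integral_Lintegrand : ∫ s in Ioi 0, Lintegrand s = 0 := by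
  have h := integral_comp_rpow_Ioi Lintegrand (p := -1) (by norm_num)
  rw [setIntegral_congr_fun measurableSet_Ioi (g := fun s => -Lintegrand s)] at h
  · rw [integral_neg] at h
    linarith
  intro s hs
  have hs0 : (0 : ℝ) ≤ s := le_of_lt hs
  simp only [smul_eq_mul]
  rw [show (-1 : ℝ) - 1 = -(2 : ℕ) by norm_num, Real.rpow_neg hs0, Real.rpow_neg_one,
    Real.rpow_natCast, abs_neg, abs_one, one_mul, mul_comm, Lintegrand_inv_mul_inv_sq]

theorem Lfun_eq_setIntegral {t : ℝ} (ht : 0 ≤ t) : Lfun t = ∫ s in Ioc 0 t, Lintegrand s := by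
  rw [Lfun, intervalIntegral.integral_of_le ht]
  rfl

theorem Lfun_eq_neg_setIntegral_Ioi {t : ℝ} (ht : 0 ≤ t) :
    Lfun t = -∫ s in Ioi t, Lintegrand s := by
  have hsplit := setIntegral_union (Ioc_disjoint_Ioi le_rfl) measurableSet_Ioi
    (integrableOn_Lintegrand.mono_set Ioc_subset_Ioi_self)
    (integrableOn_Lintegrand.mono_set (Ioi_subset_Ioi ht))
  rw [Ioc_union_Ioi_eq_Ioi ht, integral_Lintegrand] at hsplit
  rw [Lfun_eq_setIntegral ht]
  linarith

theorem Lfun_nonpos {t : ℝ} (ht : 0 ≤ t) : Lfun t ≤ 0 := by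
  rcases le_total t 1 with ht1 | ht1
  · rw [Lfun_eq_setIntegral ht]
    exact setIntegral_nonpos measurableSet_Ioc fun s hs =>
      div_nonpos_of_nonpos_of_nonneg (log_nonpos hs.1.le (hs.2.trans ht1)) (by positivity)
  · rw [Lfun_eq_neg_setIntegral_Ioi ht, neg_nonpos]
    exact setIntegral_nonneg measurableSet_Ioi fun s hs =>
      div_nonneg (log_nonneg (ht1.trans (le_of_lt hs))) (by positivity)

theorem neg_Lfun_le {t : ℝ} (ht : 1 ≤ t) : -Lfun t ≤ 16 / 3 * t ^ (-(3 / 4 : ℝ)) := by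
  have ht0 : 0 < t := one_pos.trans_le ht
  have hmaj : IntegrableOn (fun s : ℝ => 4 * s ^ (-(7 / 4 : ℝ))) (Ioi t) :=
    (integrableOn_Ioi_rpow_of_lt (by norm_num) ht0).const_mul 4
  rw [Lfun_eq_neg_setIntegral_Ioi ht0.le, neg_neg]
  calc ∫ s in Ioi t, Lintegrand s ≤ ∫ s in Ioi t, 4 * s ^ (-(7 / 4 : ℝ)) :=
        setIntegral_mono_on (integrableOn_Lintegrand.mono_set (Ioi_subset_Ioi ht0.le)) hmaj
          measurableSet_Ioi fun s hs =>
            (le_abs_self _).trans (abs_Lintegrand_le_of_one_le (ht.trans (le_of_lt hs)))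
    _ = 16 / 3 * t ^ (-(3 / 4 : ℝ)) := by
        rw [integral_const_mul, integral_Ioi_rpow_of_lt (by norm_num) ht0]
        norm_num
        ring

theorem continuousOn_Lfun : ContinuousOn Lfun (Ioi 0) := by
  intro t ht
  have hint : IntervalIntegrable Lintegrand volume 0 t :=
    (intervalIntegrable_iff_integrableOn_Ioc_of_le (le_of_lt ht)).2
      (integrableOn_Lintegrand.mono_set Ioc_subset_Ioi_self)
  exact (intervalIntegral.integral_hasDerivAt_right hint
    (continuousOn_Lintegrand.stronglyMeasurableAtFilter isOpen_Ioi t ht)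
    (continuousOn_Lintegrand.continuousAt (Ioi_mem_nhds ht))).continuousAt.continuousWithinAt

noncomputable def rDensity (t : ℝ) : ℝ := t * (1 + t ^ 2) ^ (-(5 / 4 : ℝ)) * exp (Lfun t / π)

noncomputable def rDensityRatio (t : ℝ) : ℝ :=
  (1 + (t ^ 2)⁻¹) ^ (-(5 / 4 : ℝ)) * exp (Lfun t / π)

theorem exp_Lfun_div_pi_le_one {t : ℝ} (ht : 0 ≤ t) : exp (Lfun t / π) ≤ 1 :=
  exp_le_one_iff.2 (div_nonpos_of_nonpos_of_nonneg (Lfun_nonpos ht) pi_pos.le)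

theorem rDensity_eq_rpow_mul_ratio {t : ℝ} (ht : 0 < t) :
    rDensity t = t ^ (-(3 / 2 : ℝ)) * rDensityRatio t := by
  have hsq : 1 + t ^ 2 = t ^ (2 : ℝ) * (1 + (t ^ 2)⁻¹) := by
    rw [Real.rpow_two]; field_simp; ring
  have hpow : t * (t ^ (2 : ℝ)) ^ (-(5 / 4 : ℝ)) = t ^ (-(3 / 2 : ℝ)) := by
    rw [← Real.rpow_mul ht.le, ← Real.rpow_one_add' ht.le (by norm_num)]
    norm_num
  rw [rDensity, rDensityRatio, hsq, Real.mul_rpow (by positivity) (by positivity), ← hpow]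
  ring

theorem rDensityRatio_pos (t : ℝ) : 0 < rDensityRatio t := by
  unfold rDensityRatio; positivity

theorem rDensityRatio_le_one {t : ℝ} (ht : 0 ≤ t) : rDensityRatio t ≤ 1 := by
  have hv : (1 + (t ^ 2)⁻¹) ^ (-(5 / 4 : ℝ)) ≤ 1 :=
    Real.rpow_le_one_of_one_le_of_nonpos (by simp; positivity) (by norm_num)
  exact mul_le_one₀ hv (exp_pos _).le (exp_Lfun_div_pi_le_one ht)

theorem one_sub_rDensityRatio_le {t : ℝ} (ht : 1 ≤ t) :
    1 - rDensityRatio t ≤ 7 * t ^ (-(3 / 4 : ℝ)) := by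
  have ht0 : 0 < t := one_pos.trans_le ht
  set v := (1 + (t ^ 2)⁻¹) ^ (-(5 / 4 : ℝ))
  set E := exp (Lfun t / π)
  have hv_le : v ≤ 1 := Real.rpow_le_one_of_one_le_of_nonpos (by simp; positivity) (by norm_num)
  have hinv : (t ^ 2)⁻¹ ≤ t ^ (-(3 / 4 : ℝ)) := by
    rw [← Real.rpow_two, ← Real.rpow_neg ht0.le]
    exact Real.rpow_le_rpow_of_exponent_le ht (by norm_num)
  have hv : 1 - v ≤ 5 / 4 * t ^ (-(3 / 4 : ℝ)) := by
    have := one_sub_mul_le_one_add_rpow_neg (p := 5 / 4) (inv_nonneg.2 (sq_nonneg t))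
      (by norm_num)
    linarith
  have hE : 1 - E ≤ 16 / 3 * t ^ (-(3 / 4 : ℝ)) := by
    have hL := Lfun_nonpos ht0.le
    have h1 : Lfun t ≤ Lfun t / π := by
      rw [le_div_iff₀ pi_pos]; nlinarith [pi_gt_three]
    linarith [add_one_le_exp (Lfun t / π), neg_Lfun_le ht]
  calc 1 - v * E = (1 - v) + v * (1 - E) := by ring
    _ ≤ (1 - v) + (1 - E) := by
        have : 0 ≤ 1 - E := sub_nonneg.2 (exp_Lfun_div_pi_le_one ht0.le)
        have hv0 : 0 ≤ v := Real.rpow_nonneg (by positivity) _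
        nlinarith
    _ ≤ 7 * t ^ (-(3 / 4 : ℝ)) := by linarith

theorem continuousOn_rDensityRatio : ContinuousOn rDensityRatio (Ioi 0) :=
  ((continuousOn_const.add ((continuousOn_pow 2).inv₀ fun t ht =>
    pow_ne_zero 2 (ne_of_gt ht))).rpow_const
    fun t _ => Or.inl (by positivity : (0 : ℝ) < 1 + (t ^ 2)⁻¹).ne').mul
    ((continuousOn_Lfun.div_const π).rexp)

theorem continuousOn_rDensity : ContinuousOn rDensity (Ioi 0) :=
  ((continuousOn_id.rpow_const fun _ ht => Or.inl (ne_of_gt ht)).mul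
    continuousOn_rDensityRatio).congr fun _ ht => rDensity_eq_rpow_mul_ratio ht

theorem rDensity_nonneg {t : ℝ} (ht : 0 ≤ t) : 0 ≤ rDensity t := by
  unfold rDensity; positivity

theorem rDensity_le_self {t : ℝ} (ht : 0 ≤ t) : rDensity t ≤ t := by
  have hv : (1 + t ^ 2) ^ (-(5 / 4 : ℝ)) ≤ 1 :=
    Real.rpow_le_one_of_one_le_of_nonpos (by nlinarith) (by norm_num)
  calc rDensity t ≤ t * 1 * 1 := by
        unfold rDensity; gcongr; exact exp_Lfun_div_pi_le_one ht
    _ = t := by ring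

theorem rDensity_le_rpow {t : ℝ} (ht : 0 < t) : rDensity t ≤ t ^ (-(3 / 2 : ℝ)) := by
  rw [rDensity_eq_rpow_mul_ratio ht]
  exact mul_le_of_le_one_right (Real.rpow_nonneg ht.le _) (rDensityRatio_le_one ht.le)

theorem integrableOn_rDensity : IntegrableOn rDensity (Ioi 0) := by
  refine integrableOn_Ioi_zero_of_norm_le_rpow (a := 1) (b := -(3 / 2)) (C := 1) (by norm_num)
    (by norm_num) continuousOn_rDensity (fun t ht => ?_) (fun t ht => ?_)
  · rw [Real.norm_eq_abs, abs_of_nonneg (rDensity_nonneg ht.1.le), Real.rpow_one, one_mul]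
    exact rDensity_le_self ht.1.le
  · have ht0 : (0 : ℝ) < t := one_pos.trans ht
    rw [Real.norm_eq_abs, abs_of_nonneg (rDensity_nonneg ht0.le), one_mul]
    exact rDensity_le_rpow ht0

theorem integrableOn_rpow_mul_one_sub_rDensityRatio :
    IntegrableOn (fun t => t ^ (-(1 / 2 : ℝ)) * (1 - rDensityRatio t)) (Ioi 0) := by
  refine integrableOn_Ioi_zero_of_norm_le_rpow (a := -(1 / 2)) (b := -(5 / 4)) (C := 7)
    (by norm_num) (by norm_num) ?_ (fun t ht => ?_) (fun t ht => ?_)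
  · exact (continuousOn_id.rpow_const fun t ht => Or.inl (ne_of_gt ht)).mul
      (continuousOn_const.sub continuousOn_rDensityRatio)
  · have hq := rDensityRatio_pos t
    have hq1 := rDensityRatio_le_one ht.1.le
    have hpow := Real.rpow_pos_of_pos ht.1 (-(1 / 2 : ℝ))
    rw [Real.norm_eq_abs, abs_of_nonneg (by nlinarith)]
    nlinarith
  · have ht1 : (1 : ℝ) ≤ t := le_of_lt ht
    have ht0 : (0 : ℝ) < t := one_pos.trans ht
    have hq1 := rDensityRatio_le_one ht0.le
    have hpow := Real.rpow_pos_of_pos ht0 (-(1 / 2 : ℝ))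
    rw [Real.norm_eq_abs, abs_of_nonneg (by nlinarith)]
    calc t ^ (-(1 / 2 : ℝ)) * (1 - rDensityRatio t)
        ≤ t ^ (-(1 / 2 : ℝ)) * (7 * t ^ (-(3 / 4 : ℝ))) := by
          gcongr; exact one_sub_rDensityRatio_le ht1
      _ = 7 * t ^ (-(5 / 4 : ℝ)) := by
          rw [mul_left_comm, ← Real.rpow_add ht0]; norm_num

theorem rFun_zero_sub_rFun {x : ℝ} (hx : 0 ≤ x) :
    rFun 0 - rFun x = √2 / (2 * π) * ∫ t in Ioi 0, rDensity t * (1 - exp (-(x * t))) := by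
  have hexp_int : IntegrableOn (fun t => rDensity t * exp (-t * x)) (Ioi 0) := by
    refine integrableOn_rDensity.mul_bdd (c := 1) (Continuous.aestronglyMeasurable
      (by fun_prop)) ((ae_restrict_iff' measurableSet_Ioi).2 (ae_of_all _ fun t ht => ?_))
    rw [Real.norm_eq_abs, abs_of_pos (exp_pos _)]
    exact exp_le_one_iff.2 (by nlinarith [ht.out])
  have h0 : rFun 0 = √2 / (2 * π) * ∫ t in Ioi 0, rDensity t := by
    simp only [rFun, mul_zero, exp_zero, mul_one]; rfl
  rw [h0, rFun, ← mul_sub]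
  change _ * (_ - ∫ t in Ioi 0, rDensity t * exp (-t * x)) = _
  rw [← integral_sub integrableOn_rDensity hexp_int]
  congr 1
  refine setIntegral_congr_fun measurableSet_Ioi fun t _ => ?_
  simp only [neg_mul, mul_comm x]
  ring

noncomputable def rDensityDefect (x t : ℝ) : ℝ :=
  t ^ (-(3 / 2 : ℝ)) * (1 - rDensityRatio t) * (1 - exp (-(x * t)))

section Defect

variable {x : ℝ}

theorem rDensityDefect_nonneg (hx : 0 ≤ x) {t : ℝ} (ht : 0 < t) : 0 ≤ rDensityDefect x t :=
  mul_nonneg (mul_nonneg (Real.rpow_nonneg ht.le _) (sub_nonneg.2 (rDensityRatio_le_one ht.le)))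
    (one_sub_exp_neg_nonneg (mul_nonneg hx ht.le))

theorem rDensityDefect_le {t : ℝ} (ht : 0 < t) :
    rDensityDefect x t ≤ x * (t ^ (-(1 / 2 : ℝ)) * (1 - rDensityRatio t)) := by
  have hq := sub_nonneg.2 (rDensityRatio_le_one ht.le)
  calc rDensityDefect x t ≤ t ^ (-(3 / 2 : ℝ)) * (1 - rDensityRatio t) * (x * t) := by
        unfold rDensityDefect
        gcongr
        exact (one_sub_exp_neg_le_min _).trans (min_le_right _ _)
    _ = x * (t ^ (-(3 / 2 : ℝ) + 1) * (1 - rDensityRatio t)) := by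
        rw [Real.rpow_add_one (ne_of_gt ht)]; ring
    _ = x * (t ^ (-(1 / 2 : ℝ)) * (1 - rDensityRatio t)) := by norm_num

theorem integrableOn_rDensityDefect (hx : 0 ≤ x) : IntegrableOn (rDensityDefect x) (Ioi 0) := by
  refine (integrableOn_rpow_mul_one_sub_rDensityRatio.const_mul x).mono' ?_
    ((ae_restrict_iff' measurableSet_Ioi).2 (ae_of_all _ fun t ht => ?_))
  · exact ContinuousOn.aestronglyMeasurable (((continuousOn_id.rpow_const fun _ ht =>
      Or.inl (ne_of_gt ht)).mul (continuousOn_const.sub continuousOn_rDensityRatio)).mul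
      (Continuous.continuousOn (by fun_prop))) measurableSet_Ioi
  · rw [Real.norm_eq_abs, abs_of_nonneg (rDensityDefect_nonneg hx ht)]
    exact rDensityDefect_le ht

theorem integral_rDensity_mul_one_sub_exp (hx : 0 < x) :
    ∫ t in Ioi 0, rDensity t * (1 - exp (-(x * t))) =
      2 * √π * x ^ (1 / 2 : ℝ) - ∫ t in Ioi 0, rDensityDefect x t := by
  have hmodel : ∫ t in Ioi 0, t ^ (-(3 / 2 : ℝ)) * (1 - exp (-(x * t))) =
      2 * √π * x ^ (1 / 2 : ℝ) := by
    rw [show -(3 / 2 : ℝ) = -(1 / 2) - 1 by norm_num,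
      integral_rpow_mul_one_sub_exp_neg_mul (by norm_num) (by norm_num) hx,
      show (1 : ℝ) - 1 / 2 = 1 / 2 by norm_num, Real.Gamma_one_half_eq]
    ring
  have hint : IntegrableOn (fun t => rDensity t * (1 - exp (-(x * t)))) (Ioi 0) := by
    refine integrableOn_rDensity.mul_bdd (c := 1) (Continuous.aestronglyMeasurable
      (by fun_prop)) ((ae_restrict_iff' measurableSet_Ioi).2 (ae_of_all _ fun t ht => ?_))
    have hxt : 0 ≤ x * t := mul_nonneg hx.le (le_of_lt ht)
    rw [Real.norm_eq_abs, abs_of_nonneg (one_sub_exp_neg_nonneg hxt)]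
    exact (one_sub_exp_neg_le_min _).trans (min_le_left _ _)
  rw [← hmodel, eq_sub_iff_add_eq, ← integral_add hint (integrableOn_rDensityDefect hx.le)]
  refine setIntegral_congr_fun measurableSet_Ioi fun t ht => ?_
  simp only [rDensityDefect, rDensity_eq_rpow_mul_ratio ht]
  ring

theorem abs_rFun_zero_sub_rFun_sub_rpow_le (hx : 0 < x) :
    |rFun 0 - rFun x - √(2 / π) * x ^ (1 / 2 : ℝ)| ≤
      √2 / (2 * π) * (∫ t in Ioi 0, t ^ (-(1 / 2 : ℝ)) * (1 - rDensityRatio t)) * x := by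
  have hconst : √2 / (2 * π) * (2 * √π) = √(2 / π) := by
    rw [Real.sqrt_div' 2 pi_pos.le]
    have := Real.mul_self_sqrt pi_pos.le
    field_simp
    linarith
  have hdefect_le : ∫ t in Ioi 0, rDensityDefect x t ≤
      (∫ t in Ioi 0, t ^ (-(1 / 2 : ℝ)) * (1 - rDensityRatio t)) * x := by
    rw [mul_comm, ← integral_const_mul]
    exact setIntegral_mono_on (integrableOn_rDensityDefect hx.le)
      (integrableOn_rpow_mul_one_sub_rDensityRatio.const_mul x) measurableSet_Ioi
      fun t ht => rDensityDefect_le ht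
  have hdefect_nonneg : 0 ≤ ∫ t in Ioi 0, rDensityDefect x t :=
    setIntegral_nonneg measurableSet_Ioi fun t ht => rDensityDefect_nonneg hx.le ht
  rw [rFun_zero_sub_rFun hx.le, integral_rDensity_mul_one_sub_exp hx, mul_sub, ← mul_assoc,
    hconst, sub_sub_cancel_left, abs_neg, abs_of_nonneg (by positivity), mul_assoc]
  gcongr

end Defect

/-- Assuming `r(0) = sin(π/8)`, there is `c > 0` such that
`|ψ(x) - √(2/π) x^{1/2}| ≤ c x` for all `x > 0`. -/
theorem stmt18 (hr0 : rFun 0 = Real.sin (Real.pi / 8)) :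
    ∃ c : ℝ, 0 < c ∧ ∀ x : ℝ, 0 < x →
      |psiFun x - Real.sqrt (2 / Real.pi) * x ^ ((1 / 2 : ℝ))| ≤ c * x := by
  set C := √2 / (2 * π) * ∫ t in Ioi 0, t ^ (-(1 / 2 : ℝ)) * (1 - rDensityRatio t)
  have hC : 0 ≤ C := mul_nonneg (by positivity) (setIntegral_nonneg measurableSet_Ioi
    fun t ht => mul_nonneg (Real.rpow_nonneg (le_of_lt ht) _)
      (sub_nonneg.2 (rDensityRatio_le_one (le_of_lt ht))))
  refine ⟨1 + C, by positivity, fun x hx => ?_⟩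
  have hsin : |sin (x + π / 8) - sin (π / 8)| ≤ x := by
    simpa [abs_of_pos hx] using abs_sin_sub_sin_le (x + π / 8) (π / 8)
  have hr := abs_rFun_zero_sub_rFun_sub_rpow_le hx
  calc |psiFun x - √(2 / π) * x ^ (1 / 2 : ℝ)|
      = |(sin (x + π / 8) - sin (π / 8))
          + (rFun 0 - rFun x - √(2 / π) * x ^ (1 / 2 : ℝ))| := by
        rw [psiFun, hr0]; ring_nf
    _ ≤ x + C * x := (abs_add_le _ _).trans (add_le_add hsin hr)
    _ = (1 + C) * x := by ring
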